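/- Let k ≥ 4 be even and r = 2k·k₁ + r₁ with k₁ ≥ k/2, 1 ≤ r₁ ≤ 2k−1. Under the 3-edge-coloring of K_{r,r} described by the groups U₁,…,U_{2k}, W₁,…,W_{2k} (color 1 on matched same-parity group edges, color 2 between U_i and W_{i−1}, color 3 elsewhere), for any u ∈ U_i and v ∈ W_j with i ≢ j (mod 2), there exist at least k internally disjoint rainbow u–v paths of length at most 3. -/

import Mathlib

open SimpleGraph

/-- The complete bipartite graph `K_{r,r}` with both parts `Fin r`. -/
abbrev Krr (r : ℕ) : SimpleGraph (Fin r ⊕ Fin r) :=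
  completeBipartiteGraph (Fin r) (Fin r)

/-- A walk is a rainbow path (w.r.t. edge-coloring `c`) if it is a path and
all its edges receive pairwise distinct colors. -/
def RainbowPath {V α : Type*} {G : SimpleGraph V} (c : Sym2 V → α) {u v : V}
    (p : G.Walk u v) : Prop :=
  p.IsPath ∧ (p.edges.map c).Nodup

/-- Two `u`-`v` walks are internally disjoint if they share no vertices other
than `u` and `v`. -/
def IntDisjoint {V : Type*} {G : SimpleGraph V} {u v : V}
    (p q : G.Walk u v) : Prop :=
  ∀ x, x ∈ p.support → x ∈ q.support → x = u ∨ x = v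

/-- `G` admits a `j`-edge-coloring under which every two distinct vertices are
joined by at least `k` internally disjoint rainbow paths. -/
def HasRainbowKColoring {V : Type*} (G : SimpleGraph V) (k j : ℕ) : Prop :=
  ∃ c : Sym2 V → Fin j, ∀ u v : V, u ≠ v →
    ∃ P : Fin k → G.Walk u v, Function.Injective P ∧
      (∀ i, RainbowPath c (P i)) ∧
      ∀ i i', i ≠ i' → IntDisjoint (P i) (P i')

/-- The rainbow `k`-connectivity: the least number of colors as above. -/
noncomputable def rck {V : Type*} (G : SimpleGraph V) (k : ℕ) : ℕ :=
  sInf {j | HasRainbowKColoring G k j}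

/-- A side of the bipartition: `2k` groups, each with `k₁` designated vertices
(`Sum.inl (i, p)` is the `p`-th designated vertex of group `i`), plus one extra
vertex `Sum.inr i` for each of the first `r₁` groups. In total `2k·k₁ + r₁ = r`
vertices. -/
abbrev GV (k k₁ r₁ : ℕ) := (Fin (2 * k) × Fin k₁) ⊕ Fin r₁

/-- The group (0-indexed) of a vertex of one side. -/
def grp {k k₁ r₁ : ℕ} : GV k k₁ r₁ → ℕ
  | Sum.inl (i, _) => i.val
  | Sum.inr s => s.val

/-- The condition for color 1: matched designated vertices (same index `p`) in
same-parity groups, or two extra vertices in same-parity groups. -/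
def color1 {k k₁ r₁ : ℕ} : GV k k₁ r₁ → GV k k₁ r₁ → Bool
  | Sum.inl (i, p), Sum.inl (j, q) => decide (p = q ∧ i.val % 2 = j.val % 2)
  | Sum.inr s, Sum.inr t => decide (s.val % 2 = t.val % 2)
  | _, _ => false

/-- The color of the edge from `a` in the `U`-side to `b` in the `W`-side:
color `0` ("1") on matched same-parity pairs, color `1` ("2") on edges from
`U_i` to `W_{i-1}` (indices mod `2k`), and color `2` ("3") otherwise. -/
def col (k : ℕ) {k₁ r₁ : ℕ} (a b : GV k k₁ r₁) : Fin 3 :=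
  if color1 a b then 0
  else if (grp b + 1) % (2 * k) = grp a then 1
  else 2

/-- The 3-edge-coloring of `K_{r,r}` (with `r = 2k·k₁ + r₁`). -/
def theColoring (k k₁ r₁ : ℕ) : Sym2 (GV k k₁ r₁ ⊕ GV k k₁ r₁) → Fin 3 :=
  Sym2.lift ⟨fun x y =>
    match x, y with
    | Sum.inl a, Sum.inr b => col k a b
    | Sum.inr b, Sum.inl a => col k a b
    | _, _ => 0,
    by intro x y; cases x <;> cases y <;> rfl⟩

/-!
Besides the edge `a b`, take `k - 1` paths `a w u b` of length three. With `i = grp a`,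
`j = grp b` and `m = k / 2`: `m - 1` of them run through `w ∈ W_i` and the vertex
`u ∈ U_{j+1}` of the same index (colours 3, 1, 2), `m - 1` through `w ∈ W_{i-1}` and `u ∈ U_j`
of the same index (colours 2, 1, 3), and one starts with a colour-1 edge at `a`. The indices
avoid that of `a`, resp. `b`, which is where `k₁ ≥ k / 2` is needed. Within a family the middle
vertices differ by their index; across families by the parity of their group or by the colour
of their edge to `a` or `b`.
-/

lemma exists_nodup_list_length_not_mem {α : Type*} [Fintype α] [DecidableEq α] (q : α) {n : ℕ}
    (hn : n < Fintype.card α) : ∃ l : List α, l.Nodup ∧ l.length = n ∧ q ∉ l := by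
  obtain ⟨s, hs, hcard⟩ := Finset.exists_subset_card_eq (s := Finset.univ.erase q) (n := n)
    (by rw [Finset.card_erase_of_mem (Finset.mem_univ q), Finset.card_univ]; omega)
  refine ⟨s.toList, s.nodup_toList, by simp [hcard], fun h => ?_⟩
  exact (Finset.mem_erase.1 (hs (Finset.mem_toList.1 h))).1 rfl

lemma mod_two_ne_of_succ_mod_eq {k x y : ℕ} (h : (x + 1) % (2 * k) = y) : y % 2 ≠ x % 2 := by
  have := Nat.mod_mul_right_mod (x + 1) 2 k
  omega

lemma exists_mod_two_eq_succ_mod_ne {k : ℕ} (hk : 2 ≤ k) (x y : ℕ) :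
    ∃ g : Fin (2 * k), g.val % 2 = x % 2 ∧ (g.val + 1) % (2 * k) ≠ y := by
  by_cases hy : x % 2 + 1 = y
  · refine ⟨⟨x % 2 + 2, by omega⟩, by simp, ?_⟩
    rcases Nat.lt_or_ge (x % 2 + 3) (2 * k) with hlt | hge
    · rw [Nat.mod_eq_of_lt hlt]
      omega
    · rw [show x % 2 + 2 + 1 = 2 * k by omega, Nat.mod_self]
      omega
  · refine ⟨⟨x % 2, by omega⟩, by simp, ?_⟩
    rwa [Nat.mod_eq_of_lt (show x % 2 + 1 < 2 * k by omega)]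

lemma exists_succ_mod_eq {n y : ℕ} (hy : y < n) : ∃ g : Fin n, (g.val + 1) % n = y := by
  rcases Nat.eq_zero_or_pos y with rfl | hy0
  · exact ⟨⟨n - 1, by omega⟩, by rw [Nat.sub_add_cancel (by omega), Nat.mod_self]⟩
  · exact ⟨⟨y - 1, by omega⟩, by rw [Nat.sub_add_cancel hy0, Nat.mod_eq_of_lt hy]⟩

section Detours

variable {α β γ : Type*}

def edgeWalk (a : α) (b : β) : (completeBipartiteGraph α β).Walk (.inl a) (.inr b) :=
  .cons (by simp) .nil

def detourWalk (a : α) (w : β) (u : α) (b : β) :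
    (completeBipartiteGraph α β).Walk (.inl a) (.inr b) :=
  .cons (v := .inr w) (by simp) (.cons (v := .inl u) (by simp) (.cons (by simp) .nil))

def IsRainbowDetour (c : Sym2 (α ⊕ β) → γ) (a : α) (b : β) (w : β) (u : α) : Prop :=
  w ≠ b ∧ u ≠ a ∧ [c s(.inl a, .inr w), c s(.inr w, .inl u), c s(.inl u, .inr b)].Nodup

variable {a u u' : α} {b w w' : β}

lemma support_edgeWalk : (edgeWalk a b).support = [.inl a, .inr b] := rfl

lemma support_detourWalk :
    (detourWalk a w u b).support = [.inl a, .inr w, .inl u, .inr b] := rfl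

lemma rainbowPath_edgeWalk (c : Sym2 (α ⊕ β) → γ) : RainbowPath c (edgeWalk a b) := by
  refine ⟨?_, by simp [edgeWalk]⟩
  rw [Walk.isPath_def, support_edgeWalk]
  simp

lemma IsRainbowDetour.rainbowPath {c : Sym2 (α ⊕ β) → γ} (h : IsRainbowDetour c a b w u) :
    RainbowPath c (detourWalk a w u b) := by
  obtain ⟨hwb, hua, hc⟩ := h
  refine ⟨?_, by simpa [detourWalk] using hc⟩
  rw [Walk.isPath_def, support_detourWalk]
  simp [hwb, hua.symm]

lemma IntDisjoint.symm {V : Type*} {G : SimpleGraph V} {x y : V} {p q : G.Walk x y}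
    (h : IntDisjoint p q) : IntDisjoint q p :=
  fun v hq hp => h v hp hq

lemma intDisjoint_edgeWalk (q : (completeBipartiteGraph α β).Walk (.inl a) (.inr b)) :
    IntDisjoint (edgeWalk a b) q := by
  intro v hv _
  simpa [support_edgeWalk] using hv

lemma intDisjoint_detourWalk (hw : w ≠ w') (hu : u ≠ u') :
    IntDisjoint (detourWalk a w u b) (detourWalk a w' u' b) := by
  intro v hv hv'
  simp only [support_detourWalk, List.mem_cons, List.not_mem_nil, or_false] at hv hv'
  rcases hv with rfl | rfl | rfl | rfl <;> simp_all

lemma detourWalk_inj : detourWalk a w u b = detourWalk a w' u' b ↔ w = w' ∧ u = u' := by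
  refine ⟨fun h => by simpa [support_detourWalk] using congrArg Walk.support h, ?_⟩
  rintro ⟨rfl, rfl⟩
  rfl

theorem exists_rainbowPaths_of_detours (c : Sym2 (α ⊕ β) → γ) {n : ℕ} (L : List (β × α))
    (hn : L.length + 1 = n) (hfst : (L.map Prod.fst).Nodup) (hsnd : (L.map Prod.snd).Nodup)
    (hL : ∀ x ∈ L, IsRainbowDetour c a b x.1 x.2) :
    ∃ P : Fin n → (completeBipartiteGraph α β).Walk (.inl a) (.inr b),
      Function.Injective P ∧ (∀ i, RainbowPath c (P i)) ∧ (∀ i, (P i).length ≤ 3) ∧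
      ∀ i i', i ≠ i' → IntDisjoint (P i) (P i') := by
  subst hn
  have hfst_inj : ∀ x y : Fin L.length, L[x].1 = L[y].1 → x = y := fun x y h =>
    Fin.ext <| (hfst.getElem_inj_iff (hi := by simp) (hj := by simp)).1 (by simpa using h)
  have hsnd_inj : ∀ x y : Fin L.length, L[x].2 = L[y].2 → x = y := fun x y h =>
    Fin.ext <| (hsnd.getElem_inj_iff (hi := by simp) (hj := by simp)).1 (by simpa using h)
  refine ⟨Fin.cons (edgeWalk a b) fun x => detourWalk a L[x].1 L[x].2 b, ?_, ?_, ?_, ?_⟩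
  · refine Fin.cons_injective_iff.2 ⟨?_, fun x y h => hfst_inj x y (detourWalk_inj.1 h).1⟩
    rintro ⟨x, hx⟩
    simpa [edgeWalk, detourWalk] using congrArg Walk.length hx
  · refine Fin.cases (rainbowPath_edgeWalk c) fun x => ?_
    exact (hL _ (List.getElem_mem _)).rainbowPath
  · refine Fin.cases (by simp [edgeWalk]) fun x => ?_
    simp [detourWalk]
  · intro i i' hne
    induction i using Fin.cases with
    | zero => exact intDisjoint_edgeWalk _
    | succ x =>
      induction i' using Fin.cases with
      | zero => exact (intDisjoint_edgeWalk _).symm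
      | succ y =>
        have hxy : x ≠ y := fun h => hne (h ▸ rfl)
        exact intDisjoint_detourWalk (fun h => hxy (hfst_inj x y h))
          (fun h => hxy (hsnd_inj x y h))

end Detours

section Coloring

variable {k k₁ r₁ : ℕ}

@[simp] lemma grp_inl (g : Fin (2 * k)) (p : Fin k₁) : grp (.inl (g, p) : GV k k₁ r₁) = g :=
  rfl

@[simp] lemma grp_inr (s : Fin r₁) : grp (.inr s : GV k k₁ r₁) = s := rfl

lemma grp_lt (hr₁ : r₁ ≤ 2 * k) (x : GV k k₁ r₁) : grp x < 2 * k := by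
  rcases x with ⟨g, _⟩ | s
  · exact g.isLt
  · exact lt_of_lt_of_le s.isLt hr₁

lemma ne_of_grp_mod_two_ne {x y : GV k k₁ r₁} (h : grp x % 2 ≠ grp y % 2) : x ≠ y := by
  rintro rfl
  exact h rfl

lemma color1_self (x : GV k k₁ r₁) : color1 x x = true := by
  rcases x with ⟨g, p⟩ | s <;> simp [color1]

lemma color1_comm (x y : GV k k₁ r₁) : color1 x y = color1 y x := by
  rcases x with ⟨g, p⟩ | s <;> rcases y with ⟨h, q⟩ | t <;> simp [color1, eq_comm]

lemma ne_of_color1_eq_false {x y : GV k k₁ r₁} (h : color1 x y = false) : x ≠ y := by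
  rintro rfl
  simp [color1_self] at h

lemma grp_mod_two_eq_of_color1 {x y : GV k k₁ r₁} (h : color1 x y = true) :
    grp x % 2 = grp y % 2 := by
  rcases x with ⟨g, p⟩ | s <;> rcases y with ⟨h, q⟩ | t <;> simp_all [color1]

lemma color1_inl_inl {g h : Fin (2 * k)} (hgh : g.val % 2 = h.val % 2) (p : Fin k₁) :
    color1 (.inl (g, p) : GV k k₁ r₁) (.inl (h, p)) = true := by
  simp [color1, hgh]

lemma exists_color1_eq_false (hk₁ : 0 < k₁) (x : GV k k₁ r₁) :
    ∃ q : Fin k₁, ∀ g p, p ≠ q → color1 x (.inl (g, p)) = false := by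
  rcases x with ⟨g, q⟩ | s
  · exact ⟨q, fun h p hp => by simp [color1, Ne.symm hp]⟩
  · exact ⟨⟨0, hk₁⟩, fun _ _ _ => rfl⟩

lemma col_eq_zero {x y : GV k k₁ r₁} (h : color1 x y = true) : col k x y = 0 := by
  simp [col, h]

lemma col_eq_one {x y : GV k k₁ r₁} (h : (grp y + 1) % (2 * k) = grp x) : col k x y = 1 := by
  have h1 : color1 x y = false := by
    by_contra h1
    exact mod_two_ne_of_succ_mod_eq h (grp_mod_two_eq_of_color1 (by simpa using h1))
  simp [col, h1, h]

lemma col_eq_two {x y : GV k k₁ r₁} (h : color1 x y = false) (hpar : grp x % 2 = grp y % 2) :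
    col k x y = 2 := by
  have h2 : (grp y + 1) % (2 * k) ≠ grp x := fun h2 => mod_two_ne_of_succ_mod_eq h2 hpar
  simp [col, h, h2]

lemma isRainbowDetour_theColoring_iff {a b w u : GV k k₁ r₁} :
    IsRainbowDetour (theColoring k k₁ r₁) a b w u ↔
      w ≠ b ∧ u ≠ a ∧ [col k a w, col k u w, col k u b].Nodup :=
  Iff.rfl

variable {a b : GV k k₁ r₁}

lemma isRainbowDetour_sameGroup (hpar : grp a % 2 ≠ grp b % 2) {gw gu : Fin (2 * k)}
    (hgw : gw.val = grp a) (hgu : (grp b + 1) % (2 * k) = gu) {p : Fin k₁}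
    (hp : ∀ g, color1 a (.inl (g, p)) = false) :
    IsRainbowDetour (theColoring k k₁ r₁) a b (.inl (gw, p)) (.inl (gu, p)) := by
  have hgu2 := mod_two_ne_of_succ_mod_eq hgu
  refine isRainbowDetour_theColoring_iff.2
    ⟨ne_of_grp_mod_two_ne (by simpa [hgw]), (ne_of_color1_eq_false (hp gu)).symm, ?_⟩
  rw [col_eq_two (hp gw) (by simp [hgw]), col_eq_zero (color1_inl_inl (by omega) p),
    col_eq_one (by simpa using hgu)]
  decide

lemma isRainbowDetour_predGroup (hpar : grp a % 2 ≠ grp b % 2) {gw gu : Fin (2 * k)}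
    (hgw : (gw.val + 1) % (2 * k) = grp a) (hgu : gu.val = grp b) {p : Fin k₁}
    (hp : ∀ g, color1 b (.inl (g, p)) = false) :
    IsRainbowDetour (theColoring k k₁ r₁) a b (.inl (gw, p)) (.inl (gu, p)) := by
  have hgw2 := mod_two_ne_of_succ_mod_eq hgw
  refine isRainbowDetour_theColoring_iff.2
    ⟨ne_of_color1_eq_false (by rw [color1_comm]; exact hp gw),
      ne_of_grp_mod_two_ne (by simp [hgu]; omega), ?_⟩
  rw [col_eq_one (by simpa using hgw), col_eq_zero (color1_inl_inl (by omega) p),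
    col_eq_two (by rw [color1_comm]; exact hp gu) (by simp [hgu])]
  decide

lemma exists_isRainbowDetour_matched (hk : 2 ≤ k) (hk₁ : 2 ≤ k₁)
    (hpar : grp a % 2 ≠ grp b % 2) {gu : Fin (2 * k)} (hgu : (grp b + 1) % (2 * k) = gu)
    (qa qb : Fin k₁) (hqb : ∀ g p, p ≠ qb → color1 b (.inl (g, p)) = false) :
    ∃ w u, IsRainbowDetour (theColoring k k₁ r₁) a b w u ∧ col k a w = 0 ∧
      grp u ≠ grp b ∧ ∀ p, p ≠ qa → u ≠ .inl (gu, p) := by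
  have hgu2 := mod_two_ne_of_succ_mod_eq hgu
  rcases a with ⟨ga, q⟩ | s
  · simp only [grp_inl] at hpar
    obtain ⟨g, hg, hgb⟩ := exists_mod_two_eq_succ_mod_ne hk ga (grp b)
    have : Nontrivial (Fin k₁) := Fin.nontrivial_iff_two_le.2 hk₁
    obtain ⟨t, ht⟩ := exists_ne qb
    set g' : Fin (2 * k) := ⟨(g + 1) % (2 * k), Nat.mod_lt _ (by omega)⟩ with hg'
    have hg'2 : g'.val % 2 ≠ g.val % 2 := mod_two_ne_of_succ_mod_eq rfl
    refine ⟨.inl (g, q), .inl (g', t), isRainbowDetour_theColoring_iff.2 ⟨?_, ?_, ?_⟩,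
      col_eq_zero (color1_inl_inl hg.symm q), hgb, fun p _ => ne_of_grp_mod_two_ne ?_⟩
    · exact ne_of_grp_mod_two_ne (by simp; omega)
    · exact ne_of_grp_mod_two_ne (by simp; omega)
    · rw [col_eq_zero (color1_inl_inl hg.symm q), col_eq_one (by simp [hg']),
        col_eq_two (by rw [color1_comm]; exact hqb _ _ ht) (by simp; omega)]
      decide
    · simp; omega
  · simp only [grp_inr] at hpar
    refine ⟨.inr s, .inl (gu, qa), isRainbowDetour_theColoring_iff.2 ⟨?_, by simp, ?_⟩,
      col_eq_zero (color1_self _), fun h => hgu2 (by rw [← h]; rfl),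
      fun p hp => by simp [Ne.symm hp]⟩
    · exact ne_of_grp_mod_two_ne (by simpa using hpar)
    · rw [col_eq_zero (color1_self _), col_eq_two rfl (by simp; omega),
        col_eq_one (by simpa using hgu)]
      decide

end Coloring

lemma exists_detours {k k₁ r₁ m : ℕ} (hm : 2 ≤ m) (hmk₁ : m ≤ k₁) (hkm : k = m + m)
    (hr₁ : r₁ ≤ 2 * k) {a b : GV k k₁ r₁} (hpar : grp a % 2 ≠ grp b % 2) :
    ∃ L : List (GV k k₁ r₁ × GV k k₁ r₁), L.length + 1 = k ∧ (L.map Prod.fst).Nodup ∧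
      (L.map Prod.snd).Nodup ∧
      ∀ x ∈ L, IsRainbowDetour (theColoring k k₁ r₁) a b x.1 x.2 := by
  obtain ⟨gi', hgi'⟩ := exists_succ_mod_eq (grp_lt hr₁ a)
  let gi : Fin (2 * k) := ⟨grp a, grp_lt hr₁ a⟩
  let gj : Fin (2 * k) := ⟨grp b, grp_lt hr₁ b⟩
  let gj' : Fin (2 * k) := ⟨(grp b + 1) % (2 * k), Nat.mod_lt _ (by omega)⟩
  obtain ⟨qa, hqa⟩ := exists_color1_eq_false (by omega) a
  obtain ⟨qb, hqb⟩ := exists_color1_eq_false (by omega) b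
  obtain ⟨la, hla, hla_len, hqa_la⟩ :=
    exists_nodup_list_length_not_mem qa (n := m - 1) (by simp; omega)
  obtain ⟨lb, hlb, hlb_len, hqb_lb⟩ :=
    exists_nodup_list_length_not_mem qb (n := m - 1) (by simp; omega)
  obtain ⟨wC, uC, hC, hwC, huC_grp, huC_ne⟩ :=
    exists_isRainbowDetour_matched (by omega) (by omega) hpar (gu := gj') rfl qa qb hqb
  have hpa : ∀ p ∈ la, p ≠ qa := fun p hp => ne_of_mem_of_not_mem hp hqa_la
  have hpb : ∀ p ∈ lb, p ≠ qb := fun p hp => ne_of_mem_of_not_mem hp hqb_lb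
  have hgj' : gj'.val % 2 ≠ grp b % 2 := mod_two_ne_of_succ_mod_eq rfl
  refine ⟨la.map (fun p => (.inl (gi, p), .inl (gj', p))) ++
    lb.map (fun p => (.inl (gi', p), .inl (gj, p))) ++ [(wC, uC)], ?_, ?_, ?_, ?_⟩
  · simp [hla_len, hlb_len]
    omega
  · -- the three families of `w` are separated by `col k a w`
    have hA : ∀ p ∈ la, col k a (.inl (gi, p)) = 2 := fun p hp =>
      col_eq_two (hqa gi p (hpa p hp)) rfl
    have hB : ∀ p, col k a (.inl (gi', p)) = 1 := fun p => col_eq_one hgi'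
    simp only [List.map_append, List.map_map, List.map_cons, List.map_nil]
    refine List.nodup_append.2 ⟨List.nodup_append.2 ⟨hla.map ?_, hlb.map ?_, ?_⟩,
      List.nodup_singleton _, ?_⟩
    · intro p q h; simpa using h
    · intro p q h; simpa using h
    · simp only [List.mem_map, Function.comp_apply]
      rintro _ ⟨p, hp, rfl⟩ _ ⟨q, -, rfl⟩ h
      simpa [hA p hp, hB q] using congrArg (col k a) h
    · simp only [List.mem_append, List.mem_map, Function.comp_apply, List.mem_singleton]
      rintro _ (⟨p, hp, rfl⟩ | ⟨p, -, rfl⟩) _ rfl h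
      · simpa [hA p hp, hwC] using congrArg (col k a) h
      · simpa [hB p, hwC] using congrArg (col k a) h
  · simp only [List.map_append, List.map_map, List.map_cons, List.map_nil]
    refine List.nodup_append.2 ⟨List.nodup_append.2 ⟨hla.map ?_, hlb.map ?_, ?_⟩,
      List.nodup_singleton _, ?_⟩
    · intro p q h; simpa using h
    · intro p q h; simpa using h
    · simp only [List.mem_map, Function.comp_apply]
      rintro _ ⟨p, -, rfl⟩ _ ⟨q, -, rfl⟩ h
      exact hgj' (by simpa [gj] using congrArg (fun x => grp x % 2) h)
    · simp only [List.mem_append, List.mem_map, Function.comp_apply, List.mem_singleton]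
      rintro _ (⟨p, hp, rfl⟩ | ⟨p, -, rfl⟩) _ rfl h
      · exact huC_ne p (hpa p hp) h.symm
      · exact huC_grp (by simp [← h, gj])
  · simp only [List.mem_append, List.mem_map, List.mem_singleton]
    rintro _ ((⟨p, hp, rfl⟩ | ⟨p, hp, rfl⟩) | rfl)
    · exact isRainbowDetour_sameGroup hpar rfl rfl fun g => hqa g p (hpa p hp)
    · exact isRainbowDetour_predGroup hpar hgi' rfl fun g => hqb g p (hpb p hp)
    · exact hC

theorem stmt14_general (k k₁ r₁ : ℕ) (hk : 4 ≤ k) (hke : Even k)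
    (hk₁ : k / 2 ≤ k₁) (hr₁' : r₁ ≤ 2 * k - 1)
    (a b : GV k k₁ r₁) (hpar : grp a % 2 ≠ grp b % 2) :
    ∃ P : Fin k →
        (completeBipartiteGraph (GV k k₁ r₁) (GV k k₁ r₁)).Walk
          (Sum.inl a) (Sum.inr b),
      Function.Injective P ∧
      (∀ i, RainbowPath (theColoring k k₁ r₁) (P i)) ∧
      (∀ i, (P i).length ≤ 3) ∧
      ∀ i i', i ≠ i' → IntDisjoint (P i) (P i') := by
  obtain ⟨m, hm⟩ := hke
  obtain ⟨L, hlen, hfst, hsnd, hL⟩ :=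
    exists_detours (m := m) (by omega) (by omega) hm (by omega) hpar
  exact exists_rainbowPaths_of_detours _ L hlen hfst hsnd hL

theorem stmt14 (k k₁ r₁ : ℕ) (hk : 4 ≤ k) (hke : Even k)
    (hk₁ : k / 2 ≤ k₁) (hr₁ : 1 ≤ r₁) (hr₁' : r₁ ≤ 2 * k - 1)
    (a b : GV k k₁ r₁) (hpar : grp a % 2 ≠ grp b % 2) :
    ∃ P : Fin k →
        (completeBipartiteGraph (GV k k₁ r₁) (GV k k₁ r₁)).Walk
          (Sum.inl a) (Sum.inr b),
      Function.Injective P ∧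
      (∀ i, RainbowPath (theColoring k k₁ r₁) (P i)) ∧
      (∀ i, (P i).length ≤ 3) ∧
      ∀ i i', i ≠ i' → IntDisjoint (P i) (P i') :=
  stmt14_general k k₁ r₁ hk hke hk₁ hr₁' a b hpar
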